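/- For integers d ≥ 3 and 1 ≤ r < d/2, the number of partitions of n into parts congruent to r, d−r, or 0 modulo d such that successive parts differ by at least d, with strict inequality (difference > d) when the smaller part is divisible by d, equals the number of partitions of n into distinct parts congruent to ±r modulo d. -/

import Mathlib

set_option linter.unusedSectionVars false

namespace SchurPf

variable (d r : ℕ)

def lo (m : ℕ) : ℕ := if (m / d) % 2 = 0 then d * (m / d / 2) - r else d * (m / d / 2) + r

def hi (m : ℕ) : ℕ := m - lo d r m

def OKr (x : ℕ) : Prop := x % d = r ∨ x % d = d - r

variable {d r}

section arith

private lemma mod_small (hd : 3 ≤ d) {c : ℕ} (hc : c < d) (t : ℕ) : (d * t + c) % d = c := by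
  rw [Nat.mul_add_mod, Nat.mod_eq_of_lt hc]

private lemma mul_pred (hd : 3 ≤ d) (t : ℕ) (ht : 1 ≤ t) : d * t = d * (t - 1) + d := by
  cases t with
  | zero => omega
  | succ n => simp [Nat.mul_succ]

/-- master spec for the split of `m = d*K`, by parity of `K`. -/
lemma lo_spec (hd : 3 ≤ d) (hr1 : 1 ≤ r) (hr2 : 2 * r < d) {m : ℕ} (hm : d ∣ m) (h1 : d ≤ m) :
    (r ≤ lo d r m ∧ lo d r m + hi d r m = m) ∧
    ((lo d r m % d = d - r ∧ hi d r m % d = r ∧ hi d r m = lo d r m + 2*r) ∨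
     (lo d r m % d = r ∧ hi d r m % d = d - r ∧ hi d r m = lo d r m + (d - 2*r))) := by
  obtain ⟨K, hK⟩ := hm
  have hd0 : 0 < d := by omega
  have hKd : m / d = K := by rw [hK, Nat.mul_div_cancel_left _ hd0]
  have hK1 : 1 ≤ K := by
    by_contra h
    have : K = 0 := by omega
    subst this; simp at hK; omega
  rcases Nat.even_or_odd K with ⟨t, ht⟩ | ⟨t, ht⟩
  · have ht1 : 1 ≤ t := by omega
    have hKe : K % 2 = 0 := by omega
    have hK2 : K / 2 = t := by omega
    have hlo : lo d r m = d * t - r := by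
      unfold lo; rw [hKd, hKe, hK2]; simp
    have hmval : m = d * t + d * t := by
      rw [hK, ht]; ring
    have htd : d ≤ d * t := by
      calc d = d * 1 := by ring
        _ ≤ d * t := Nat.mul_le_mul_left d ht1
    have hhi : hi d r m = d * t + r := by
      unfold hi; rw [hlo]; omega
    have hpred := mul_pred hd t ht1
    have hlomod : (d * t - r) % d = d - r := by
      have h2 : d * t - r = d * (t-1) + (d - r) := by omega
      rw [h2, mod_small hd (by omega)]
    constructor
    · exact ⟨by omega, by omega⟩
    · left
      refine ⟨by rw [hlo]; exact hlomod, ?_, by omega⟩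
      rw [hhi, mod_small hd (by omega)]
  · have hKe : K % 2 = 1 := by omega
    have hK2 : K / 2 = t := by omega
    have hlo : lo d r m = d * t + r := by
      unfold lo; rw [hKd, hKe, hK2]; simp
    have hmval : m = d * t + d * t + d := by rw [hK, ht]; ring
    have hhi : hi d r m = d * t + (d - r) := by
      unfold hi; rw [hlo]; omega
    constructor
    · exact ⟨by omega, by omega⟩
    · right
      refine ⟨by rw [hlo]; exact mod_small hd (by omega) t, ?_, by omega⟩
      rw [hhi, mod_small hd (by omega)]

lemma lo_hi_sum (hd : 3 ≤ d) (hr1 : 1 ≤ r) (hr2 : 2 * r < d) {m : ℕ} (hm : d ∣ m) (h1 : d ≤ m) : lo d r m + hi d r m = m :=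
  ((lo_spec hd hr1 hr2 hm h1).1).2

lemma lo_pos (hd : 3 ≤ d) (hr1 : 1 ≤ r) (hr2 : 2 * r < d) {m : ℕ} (hm : d ∣ m) (h1 : d ≤ m) : r ≤ lo d r m :=
  ((lo_spec hd hr1 hr2 hm h1).1).1

lemma lo_lt_hi (hd : 3 ≤ d) (hr1 : 1 ≤ r) (hr2 : 2 * r < d) {m : ℕ} (hm : d ∣ m) (h1 : d ≤ m) : lo d r m < hi d r m := by
  rcases (lo_spec hd hr1 hr2 hm h1).2 with ⟨_, _, h⟩ | ⟨_, _, h⟩ <;> omega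

lemma hi_lt_lo_add (hd : 3 ≤ d) (hr1 : 1 ≤ r) (hr2 : 2 * r < d) {m : ℕ} (hm : d ∣ m) (h1 : d ≤ m) : hi d r m < lo d r m + d := by
  rcases (lo_spec hd hr1 hr2 hm h1).2 with ⟨_, _, h⟩ | ⟨_, _, h⟩ <;> omega

lemma OKr_lo (hd : 3 ≤ d) (hr1 : 1 ≤ r) (hr2 : 2 * r < d) {m : ℕ} (hm : d ∣ m) (h1 : d ≤ m) : OKr d r (lo d r m) := by
  rcases (lo_spec hd hr1 hr2 hm h1).2 with ⟨h, _, _⟩ | ⟨h, _, _⟩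
  · exact Or.inr h
  · exact Or.inl h

lemma OKr_hi (hd : 3 ≤ d) (hr1 : 1 ≤ r) (hr2 : 2 * r < d) {m : ℕ} (hm : d ∣ m) (h1 : d ≤ m) : OKr d r (hi d r m) := by
  rcases (lo_spec hd hr1 hr2 hm h1).2 with ⟨_, h, _⟩ | ⟨_, h, _⟩
  · exact Or.inl h
  · exact Or.inr h

lemma lo_add_d (hd : 3 ≤ d) (hr1 : 1 ≤ r) (hr2 : 2 * r < d) {m : ℕ} (hm : d ∣ m) (h1 : d ≤ m) : lo d r (m + d) = hi d r m := by
  obtain ⟨K, hK⟩ := hm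
  have hd0 : 0 < d := by omega
  have hKd : m / d = K := by rw [hK, Nat.mul_div_cancel_left _ hd0]
  have hKd' : (m + d) / d = K + 1 := by
    have : m + d = d * (K + 1) := by rw [hK]; ring
    rw [this, Nat.mul_div_cancel_left _ hd0]
  have hK1 : 1 ≤ K := by
    by_contra h
    have : K = 0 := by omega
    subst this; simp at hK; omega
  rcases Nat.even_or_odd K with ⟨t, ht⟩ | ⟨t, ht⟩
  · have ht1 : 1 ≤ t := by omega
    have hKe : K % 2 = 0 := by omega
    have h2 : (K + 1) % 2 = 1 := by omega
    have h3 : (K + 1) / 2 = t := by omega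
    have hK2 : K / 2 = t := by omega
    have hlo : lo d r m = d * t - r := by unfold lo; rw [hKd, hKe, hK2]; simp
    have hmval : m = d * t + d * t := by rw [hK, ht]; ring
    have hlo' : lo d r (m + d) = d * t + r := by unfold lo; rw [hKd', h2, h3]; simp
    have htd : d ≤ d * t := by
      calc d = d * 1 := by ring
        _ ≤ d * t := Nat.mul_le_mul_left d ht1
    unfold hi; omega
  · have hKe : K % 2 = 1 := by omega
    have h2 : (K + 1) % 2 = 0 := by omega
    have h3 : (K + 1) / 2 = t + 1 := by omega
    have hK2 : K / 2 = t := by omega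
    have hlo : lo d r m = d * t + r := by unfold lo; rw [hKd, hKe, hK2]; simp
    have hmval : m = d * t + d * t + d := by rw [hK, ht]; ring
    have hlo' : lo d r (m + d) = d * (t+1) - r := by unfold lo; rw [hKd', h2, h3]; simp
    have htd : d * (t + 1) = d * t + d := by ring
    unfold hi; omega

lemma hi_add_d (hd : 3 ≤ d) (hr1 : 1 ≤ r) (hr2 : 2 * r < d) {m : ℕ} (hm : d ∣ m) (h1 : d ≤ m) : hi d r (m + d) = lo d r m + d := by
  have h2 := lo_hi_sum hd hr1 hr2 (dvd_add hm dvd_rfl) (by omega)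
  have h3 := lo_add_d hd hr1 hr2 hm h1
  have h4 := lo_hi_sum hd hr1 hr2 hm h1
  omega

lemma lo_add_2d (hd : 3 ≤ d) (hr1 : 1 ≤ r) (hr2 : 2 * r < d) {m : ℕ} (hm : d ∣ m) (h1 : d ≤ m) : lo d r (m + 2*d) = lo d r m + d := by
  have e1 : m + 2*d = (m + d) + d := by ring
  rw [e1, lo_add_d hd hr1 hr2 (dvd_add hm dvd_rfl) (by omega),
    hi_add_d hd hr1 hr2 hm h1]

lemma lo_add_mul (hd : 3 ≤ d) (hr1 : 1 ≤ r) (hr2 : 2 * r < d) {m : ℕ} (hm : d ∣ m) (h1 : d ≤ m) (t : ℕ) :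
    lo d r m + t ≤ lo d r (m + d * t) := by
  induction t with
  | zero => simp
  | succ j ih =>
    have hm' : d ∣ m + d * j := dvd_add hm (Dvd.intro j rfl)
    have e : m + d * (j+1) = (m + d * j) + d := by ring
    rw [e, lo_add_d hd hr1 hr2 hm' (by omega)]
    have := lo_lt_hi hd hr1 hr2 hm' (show d ≤ m + d * j by omega)
    omega

lemma lo_upper (hd : 3 ≤ d) (hr1 : 1 ≤ r) (hr2 : 2 * r < d) {m : ℕ} (hm : d ∣ m) (h1 : d ≤ m) (t : ℕ) :
    lo d r (m + d * t) ≤ lo d r m + t * (d - 1) := by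
  induction t with
  | zero => simp
  | succ j ih =>
    have hm' : d ∣ m + d * j := dvd_add hm (Dvd.intro j rfl)
    have e : m + d * (j+1) = (m + d * j) + d := by ring
    rw [e, lo_add_d hd hr1 hr2 hm' (by omega)]
    have := hi_lt_lo_add hd hr1 hr2 hm' (show d ≤ m + d * j by omega)
    have e2 : (j+1) * (d-1) = j * (d-1) + (d-1) := by ring
    omega

lemma gap_same (hd : 3 ≤ d) {a b : ℕ} (h : a % d = b % d) (hlt : b < a) : b + d ≤ a := by
  have hd0 : 0 < d := by omega
  have h2 : d ∣ a - b := (Nat.modEq_iff_dvd' (by omega)).mp h.symm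
  have := Nat.le_of_dvd (by omega) h2
  omega

lemma gap_ge (hd : 3 ≤ d) {a b c : ℕ} (hc : c < d) (h : (b + c) % d = a % d) (hlt : b < a) : b + c ≤ a := by
  have hd0 : 0 < d := by omega
  by_contra hcon
  have h2 : d ∣ (b + c) - a := (Nat.modEq_iff_dvd' (by omega)).mp h.symm
  have := Nat.le_of_dvd (by omega) h2
  omega

lemma add_mod_eq (hd : 3 ≤ d) {x : ℕ} (c : ℕ) (hc : x % d + c < d) : (x + c) % d = x % d + c := by
  have h1 := Nat.div_add_mod x d
  have h2 : x + c = d * (x / d) + (x % d + c) := by omega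
  rw [h2, mod_small hd (by omega)]

lemma add_mod_wrap (hd : 3 ≤ d) {x : ℕ} (c : ℕ) (h1 : d ≤ x % d + c) (h2 : x % d + c < 2*d) :
    (x + c) % d = x % d + c - d := by
  have h3 := Nat.div_add_mod x d
  have h4 : x + c = d * (x / d + 1) + (x % d + c - d) := by
    have : d * (x / d + 1) = d * (x / d) + d := by ring
    omega
  rw [h4, mod_small hd (by omega)]

lemma eq_close (hd : 3 ≤ d) {a b : ℕ} (h : a % d = b % d) (h1 : a < b + d) (h2 : b < a + d) : a = b := by
  rcases lt_trichotomy a b with hl | he | hl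
  · have := gap_same hd h.symm hl; omega
  · exact he
  · have := gap_same hd h hl; omega

/-- P1: a close pair of OK residues is the canonical split of its (divisible) sum. -/
lemma split_eq (hd : 3 ≤ d) (hr1 : 1 ≤ r) (hr2 : 2 * r < d) {x y : ℕ} (hx : OKr d r x) (hy : OKr d r y) (hxy : x < y) (hyx : y < x + d) :
    d ∣ (x + y) ∧ d ≤ x + y ∧ lo d r (x + y) = x ∧ hi d r (x + y) = y := by
  have hd0 : 0 < d := by omega
  have hq := Nat.div_add_mod x d
  set q := x / d with hqdef
  rcases hx with hx | hx <;> rcases hy with hy | hy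
  · exfalso; have := gap_same hd (hy.trans hx.symm) hxy; omega
  · -- x ≡ r, y ≡ d - r, so y = x + (d - 2r), K odd
    have hmod : (x + (d - 2*r)) % d = y % d := by
      rw [add_mod_eq hd (x := x) (d - 2*r) (by omega), hx, hy]; omega
    have hyval : y = x + (d - 2*r) := (eq_close hd hmod (by omega) (by omega)).symm
    have hxval : x = d * q + r := by omega
    have hsum : x + y = d * (2*q + 1) := by
      have : d * (2*q+1) = d*q + d*q + d := by ring
      omega
    refine ⟨⟨2*q+1, hsum⟩, by omega, ?_, ?_⟩
    · unfold lo
      have hKd : (x + y) / d = 2*q+1 := by rw [hsum, Nat.mul_div_cancel_left _ hd0]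
      rw [hKd]
      have e1 : (2*q+1) % 2 = 1 := by omega
      have e2 : (2*q+1) / 2 = q := by omega
      rw [e1, e2]; simp; omega
    · unfold hi
      have hlo : lo d r (x + y) = x := by
        unfold lo
        have hKd : (x + y) / d = 2*q+1 := by rw [hsum, Nat.mul_div_cancel_left _ hd0]
        rw [hKd]
        have e1 : (2*q+1) % 2 = 1 := by omega
        have e2 : (2*q+1) / 2 = q := by omega
        rw [e1, e2]; simp; omega
      rw [hlo]; omega
  · -- x ≡ d - r, y ≡ r: y = x + 2r, K even
    have hmod : (x + 2*r) % d = y % d := by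
      rw [add_mod_wrap hd (x := x) (2*r) (by omega) (by omega), hx, hy]; omega
    have hyval : y = x + 2*r := (eq_close hd hmod (by omega) (by omega)).symm
    have hxval : x = d * q + (d - r) := by omega
    have hsum : x + y = d * (2*q + 2) := by
      have : d * (2*q+2) = d*q + d*q + d + d := by ring
      omega
    have hlo : lo d r (x + y) = x := by
      unfold lo
      have hKd : (x + y) / d = 2*q+2 := by rw [hsum, Nat.mul_div_cancel_left _ hd0]
      rw [hKd]
      have e1 : (2*q+2) % 2 = 0 := by omega
      have e2 : (2*q+2) / 2 = q+1 := by omega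
      rw [e1, e2]; simp
      have : d * (q+1) = d*q + d := by ring
      omega
    refine ⟨⟨2*q+2, hsum⟩, by omega, hlo, ?_⟩
    unfold hi; rw [hlo]; omega
  · exfalso; have := gap_same hd (hy.trans hx.symm) hxy; omega

/-- P3: any OK value above `hi m` is at least `lo m + d`. -/
lemma above_hi (hd : 3 ≤ d) (hr1 : 1 ≤ r) (hr2 : 2 * r < d) {m z : ℕ} (hm : d ∣ m) (h1 : d ≤ m) (hz : OKr d r z) (hgt : hi d r m < z) :
    lo d r m + d ≤ z := by
  rcases (lo_spec hd hr1 hr2 hm h1).2 with ⟨hl, hh, he⟩ | ⟨hl, hh, he⟩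
  · rcases hz with hz | hz
    · have := gap_same hd (hz.trans hh.symm) hgt; omega
    · have hmod : (hi d r m + (d - 2*r)) % d = z % d := by
        rw [add_mod_eq hd (x := hi d r m) (d - 2*r) (by omega), hh, hz]; omega
      have := gap_ge hd (show d - 2*r < d by omega) hmod hgt; omega
  · rcases hz with hz | hz
    · have hmod : (hi d r m + 2*r) % d = z % d := by
        rw [add_mod_wrap hd (x := hi d r m) (2*r) (by omega) (by omega), hh, hz]; omega
      have := gap_ge hd (show 2*r < d by omega) hmod hgt; omega
    · have := gap_same hd (hz.trans hh.symm) hgt; omega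

end arith

section lists
variable (d r : ℕ)

/-- merge two reduced sequences into a Schur partition (ascending), with staircase. -/
def buildS (k : ℕ) : List ℕ → List ℕ → List ℕ
  | [], [] => []
  | [], b :: B => (b + d*k) :: buildS (k+1) [] B
  | a :: A, [] => (a + d*k) :: buildS (k+1) A []
  | a :: A, b :: B =>
      if a < b then (a + d*k) :: buildS (k+1) A (b :: B)
      else (b + d*k) :: buildS (k+1) (a :: A) B
  termination_by A B => A.length + B.length

/-- split a Schur partition (ascending) into reduced data. -/
def parseS (k : ℕ) : List ℕ → List ℕ × List ℕ
  | [] => ([], [])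
  | x :: t =>
      let p := parseS (k+1) t
      if d ∣ x then (p.1, (x - d*k) :: p.2) else ((x - d*k) :: p.1, p.2)

/-- build a distinct-parts partition (ascending) from reduced data. -/
def buildD (k : ℕ) : List ℕ → List ℕ → List ℕ
  | [], [] => []
  | [], b :: B => lo d r (b + d*k) :: hi d r (b + d*k) :: buildD (k+1) [] B
  | a :: A, [] => (a + d*k) :: buildD (k+1) A []
  | a :: A, b :: B =>
      if hi d r (b + d*k) < a + d*(k+1)
      then lo d r (b + d*k) :: hi d r (b + d*k) :: buildD (k+1) (a :: A) B
      else (a + d*k) :: buildD (k+1) A (b :: B)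
  termination_by A B => A.length + B.length

/-- greedily pair up a distinct-parts partition (ascending) into reduced data. -/
def parseD (k : ℕ) : List ℕ → List ℕ × List ℕ
  | [] => ([], [])
  | [x] => ([x - d*k], [])
  | x :: y :: t =>
      if y < x + d
      then let p := parseD (k+1) t; (p.1, (x + y - d*k) :: p.2)
      else let p := parseD (k+1) (y :: t); ((x - d*k) :: p.1, p.2)
  termination_by l => l.length

def schurRel (x y : ℕ) : Prop := x + d ≤ y ∧ (d ∣ y → x + d < y)

end lists


section Sside
variable {d r : ℕ}

lemma OKr_not_dvd (hd : 3 ≤ d) (hr1 : 1 ≤ r) (hr2 : 2 * r < d) {x : ℕ} (hx : OKr d r x) :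
    ¬ d ∣ x := by
  intro h
  have h0 : x % d = 0 := Nat.mod_eq_zero_of_dvd h
  rcases hx with h' | h' <;> omega

lemma mod_add_mul (x k : ℕ) : (x + d * k) % d = x % d := by
  simp [Nat.add_mul_mod_self_left]

lemma mod_sub_mul {x k : ℕ} (h : d * k ≤ x) : (x - d * k) % d = x % d := by
  conv_rhs => rw [show x = (x - d * k) + d * k by omega]
  rw [mod_add_mul]

lemma dvd_mod_zero {x : ℕ} (h : d ∣ x) : x % d = 0 := Nat.mod_eq_zero_of_dvd h

/-- spec of `buildS` on good data. -/
lemma buildS_spec (hd : 3 ≤ d) (hr1 : 1 ≤ r) (hr2 : 2 * r < d) :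
    ∀ (k : ℕ) (A B : List ℕ),
    A.Chain' (· ≤ ·) → B.Chain' (fun b b' => b + d ≤ b') →
    (∀ a ∈ A, 1 ≤ a ∧ OKr d r a) → (∀ b ∈ B, d ∣ b ∧ d ≤ b) →
    (buildS d k A B).Chain' (schurRel d) ∧
    (∀ z ∈ buildS d k A B, 0 < z ∧ (z % d = r ∨ z % d = d - r ∨ z % d = 0)) ∧
    parseS d k (buildS d k A B) = (A, B) ∧
    (∀ z, (buildS d k A B).head? = some z →
      d*k < z ∧ ((∃ a, A.head? = some a ∧ z = a + d*k ∧ ¬ d ∣ z) ∨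
                 (∃ b, B.head? = some b ∧ z = b + d*k ∧ d ∣ z))) := by
  intro k A B
  induction k, A, B using buildS.induct with
  | case1 k =>
    intro _ _ _ _
    refine ⟨by simp [buildS, List.Chain'], by simp [buildS], by simp [buildS, parseS], by simp [buildS]⟩
  | case2 k b B ih =>
    intro hA hB memA memB
    have ihh := ih List.isChain_nil (hB.tail) (by simp) (fun x hx => memB x (by simp [hx]))
    obtain ⟨ich, imem, ipar, ihead⟩ := ihh
    have hk1 : d * (k+1) = d * k + d := by ring
    have hbb := memB b (by simp)
    have hdvd : d ∣ b + d * k := dvd_add hbb.1 (Dvd.intro k rfl)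
    have heq : buildS d k [] (b :: B) = (b + d*k) :: buildS d (k+1) [] B := by
      simp [buildS]
    refine ⟨?_, ?_, ?_, ?_⟩
    · rw [heq]
      refine List.isChain_cons.mpr ⟨?_, ich⟩
      intro z hz
      simp only [schurRel]
      rcases ihead z hz with ⟨hz1, hz2⟩
      rcases hz2 with ⟨a, ha, _, _⟩ | ⟨b', hb', hz3, hz4⟩
      · simp at ha
      · have hrel : b + d ≤ b' := (List.isChain_cons.mp hB).1 b' hb'
        constructor
        · omega
        · intro _; omega
    · rw [heq]
      intro z hz
      rcases List.mem_cons.mp hz with rfl | hz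
      · exact ⟨by omega, Or.inr (Or.inr (by rw [mod_add_mul]; exact dvd_mod_zero hbb.1))⟩
      · exact imem z hz
    · rw [heq]
      simp only [parseS, ipar]
      rw [if_pos hdvd]
      simp
      try omega
    · rw [heq]
      intro z hz
      simp only [List.head?_cons, Option.some.injEq] at hz
      subst hz
      exact ⟨by omega, Or.inr ⟨b, by simp, rfl, hdvd⟩⟩
  | case3 k a A ih =>
    intro hA hB memA memB
    have ihh := ih hA.tail List.isChain_nil (fun x hx => memA x (by simp [hx])) (by simp)
    obtain ⟨ich, imem, ipar, ihead⟩ := ihh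
    have hk1 : d * (k+1) = d * k + d := by ring
    have haa := memA a (by simp)
    have hnd : ¬ d ∣ a + d * k := by
      intro h
      have := dvd_mod_zero (d := d) h
      rw [mod_add_mul] at this
      rcases haa.2 with h' | h' <;> omega
    have heq : buildS d k (a :: A) [] = (a + d*k) :: buildS d (k+1) A [] := by
      simp [buildS]
    refine ⟨?_, ?_, ?_, ?_⟩
    · rw [heq]
      refine List.isChain_cons.mpr ⟨?_, ich⟩
      intro z hz
      simp only [schurRel]
      rcases ihead z hz with ⟨hz1, hz2⟩
      rcases hz2 with ⟨a', ha', hz3, hz4⟩ | ⟨b', hb', _, _⟩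
      · have hrel : a ≤ a' := (List.isChain_cons.mp hA).1 a' ha'
        exact ⟨by omega, fun hdz => absurd hdz hz4⟩
      · simp at hb'
    · rw [heq]
      intro z hz
      rcases List.mem_cons.mp hz with rfl | hz
      · refine ⟨by omega, ?_⟩
        rw [mod_add_mul]
        rcases haa.2 with h' | h'
        · exact Or.inl h'
        · exact Or.inr (Or.inl h')
      · exact imem z hz
    · rw [heq]
      simp only [parseS, ipar]
      rw [if_neg hnd]
      simp
      try omega
    · rw [heq]
      intro z hz
      simp only [List.head?_cons, Option.some.injEq] at hz
      subst hz
      exact ⟨by omega, Or.inl ⟨a, by simp, rfl, hnd⟩⟩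
  | case4 k a A b B hab ih =>
    intro hA hB memA memB
    have ihh := ih hA.tail hB (fun x hx => memA x (by simp [hx])) memB
    obtain ⟨ich, imem, ipar, ihead⟩ := ihh
    have hk1 : d * (k+1) = d * k + d := by ring
    have haa := memA a (by simp)
    have hnd : ¬ d ∣ a + d * k := by
      intro h
      have := dvd_mod_zero (d := d) h
      rw [mod_add_mul] at this
      rcases haa.2 with h' | h' <;> omega
    have heq : buildS d k (a :: A) (b :: B) = (a + d*k) :: buildS d (k+1) A (b :: B) := by
      simp [buildS, hab]
    refine ⟨?_, ?_, ?_, ?_⟩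
    · rw [heq]
      refine List.isChain_cons.mpr ⟨?_, ich⟩
      intro z hz
      simp only [schurRel]
      rcases ihead z hz with ⟨hz1, hz2⟩
      rcases hz2 with ⟨a', ha', hz3, hz4⟩ | ⟨b', hb', hz3, hz4⟩
      · have hrel : a ≤ a' := (List.isChain_cons.mp hA).1 a' ha'
        exact ⟨by omega, fun hdz => absurd hdz hz4⟩
      · simp only [List.head?_cons, Option.some.injEq] at hb'
        subst hb'
        exact ⟨by omega, fun _ => by omega⟩
    · rw [heq]
      intro z hz
      rcases List.mem_cons.mp hz with rfl | hz
      · refine ⟨by omega, ?_⟩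
        rw [mod_add_mul]
        rcases haa.2 with h' | h'
        · exact Or.inl h'
        · exact Or.inr (Or.inl h')
      · exact imem z hz
    · rw [heq]
      simp only [parseS, ipar]
      rw [if_neg hnd]
      simp
      try omega
    · rw [heq]
      intro z hz
      simp only [List.head?_cons, Option.some.injEq] at hz
      subst hz
      exact ⟨by omega, Or.inl ⟨a, by simp, rfl, hnd⟩⟩
  | case5 k a A b B hab ih =>
    intro hA hB memA memB
    have ihh := ih hA hB.tail memA (fun x hx => memB x (by simp [hx]))
    obtain ⟨ich, imem, ipar, ihead⟩ := ihh
    have hk1 : d * (k+1) = d * k + d := by ring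
    have hbb := memB b (by simp)
    have hdvd : d ∣ b + d * k := dvd_add hbb.1 (Dvd.intro k rfl)
    have heq : buildS d k (a :: A) (b :: B) = (b + d*k) :: buildS d (k+1) (a :: A) B := by
      simp [buildS, hab]
    refine ⟨?_, ?_, ?_, ?_⟩
    · rw [heq]
      refine List.isChain_cons.mpr ⟨?_, ich⟩
      intro z hz
      simp only [schurRel]
      rcases ihead z hz with ⟨hz1, hz2⟩
      rcases hz2 with ⟨a', ha', hz3, hz4⟩ | ⟨b', hb', hz3, hz4⟩
      · simp only [List.head?_cons, Option.some.injEq] at ha'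
        subst ha'
        exact ⟨by omega, fun hdz => absurd hdz hz4⟩
      · have hrel : b + d ≤ b' := (List.isChain_cons.mp hB).1 b' hb'
        exact ⟨by omega, fun _ => by omega⟩
    · rw [heq]
      intro z hz
      rcases List.mem_cons.mp hz with rfl | hz
      · exact ⟨by omega, Or.inr (Or.inr (by rw [mod_add_mul]; exact dvd_mod_zero hbb.1))⟩
      · exact imem z hz
    · rw [heq]
      simp only [parseS, ipar]
      rw [if_pos hdvd]
      simp
      try omega
    · rw [heq]
      intro z hz
      simp only [List.head?_cons, Option.some.injEq] at hz
      subst hz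
      exact ⟨by omega, Or.inr ⟨b, by simp, rfl, hdvd⟩⟩

/-- spec of `parseS` on a Schur partition (ascending). -/
lemma parseS_spec (hd : 3 ≤ d) (hr1 : 1 ≤ r) (hr2 : 2 * r < d) :
    ∀ (k : ℕ) (l : List ℕ),
    l.Chain' (schurRel d) →
    (∀ x ∈ l, 0 < x ∧ (x % d = r ∨ x % d = d - r ∨ x % d = 0)) →
    (∀ x, l.head? = some x → d * k < x) →
    (parseS d k l).1.Chain' (· ≤ ·) ∧
    (parseS d k l).2.Chain' (fun b b' => b + d ≤ b') ∧
    (∀ a ∈ (parseS d k l).1, 1 ≤ a ∧ OKr d r a) ∧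
    (∀ b ∈ (parseS d k l).2, d ∣ b ∧ d ≤ b) ∧
    buildS d k (parseS d k l).1 (parseS d k l).2 = l ∧
    (∀ a, (parseS d k l).1.head? = some a → ∀ x, l.head? = some x → x ≤ a + d * k) ∧
    (∀ b, (parseS d k l).2.head? = some b → ∀ x, l.head? = some x →
        x ≤ b + d * k ∧ (¬ d ∣ x → x < b + d * k)) := by
  intro k l
  induction k, l using parseS.induct (d := d) with
  | case1 k =>
    intro _ _ _
    refine ⟨by simp [parseS, List.Chain'], by simp [parseS, List.Chain'], by simp [parseS], by simp [parseS],
      by simp [parseS, buildS], by simp [parseS], by simp [parseS]⟩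
  | case2 k x t hdx ih =>
    intro hch hmem hk
    have hk1 : d * (k+1) = d * k + d := by ring
    have hkx : d * k < x := hk x rfl
    have hchmp := List.isChain_cons.mp hch
    have iht := ih hchmp.2 (fun z hz => hmem z (by simp [hz]))
      (fun z hz => by
        have := hchmp.1 z hz
        simp only [schurRel] at this
        omega)
    obtain ⟨ic1, ic2, ic3, ic4, ic5, ic6, ic7⟩ := iht
    have heq : parseS d k (x :: t) = ((parseS d (k+1) t).1, (x - d*k) :: (parseS d (k+1) t).2) := by
      simp [parseS, hdx]
    have hdvdsub : d ∣ x - d * k := Nat.dvd_sub hdx (Dvd.intro k rfl)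
    have hsub_pos : 0 < x - d * k := by omega
    have hsubd : d ≤ x - d * k := Nat.le_of_dvd hsub_pos hdvdsub
    rw [heq]
    refine ⟨ic1, ?_, ic3, ?_, ?_, ?_, ?_⟩
    · refine List.isChain_cons.mpr ⟨?_, ic2⟩
      intro b₁ hb₁
      -- need (x - d*k) + d ≤ b₁
      have hb₁mem : b₁ ∈ (parseS d (k+1) t).2 := List.mem_of_mem_head? hb₁
      have hb₁dvd := ic4 b₁ hb₁mem
      -- t nonempty
      cases t with
      | nil => simp [parseS] at hb₁
      | cons z t' =>
        have h7 := ic7 b₁ hb₁ z rfl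
        have hrel := hchmp.1 z rfl
        simp only [schurRel] at hrel
        have hlt : x < b₁ + d * k := by
          by_cases hdz : d ∣ z
          · have := hrel.2 hdz; omega
          · have := h7.2 hdz; omega
        have hmodeq : x % d = (b₁ + d * k) % d := by
          rw [mod_add_mul, dvd_mod_zero hdx, dvd_mod_zero hb₁dvd.1]
        have := gap_same hd hmodeq.symm hlt
        omega
    · intro b hb
      rcases List.mem_cons.mp hb with rfl | hb
      · exact ⟨hdvdsub, hsubd⟩
      · exact ic4 b hb
    · -- buildS d k A ((x-d*k) :: B) = x :: t
      cases hA : (parseS d (k+1) t).1 with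
      | nil =>
        rw [hA] at ic5
        have heq2 : buildS d k [] ((x - d*k) :: (parseS d (k+1) t).2) =
            ((x - d*k) + d*k) :: buildS d (k+1) [] (parseS d (k+1) t).2 := by
          simp [buildS]
        rw [heq2, ic5]
        congr 1
        omega
      | cons a₁ A' =>
        have hx_le : x ≤ a₁ + d * k := by
          cases t with
          | nil => simp [parseS] at hA
          | cons z t' =>
            have h6 := ic6 a₁ (by rw [hA]; rfl) z rfl
            have hrel := hchmp.1 z rfl
            simp only [schurRel] at hrel
            omega
        have hrule : ¬ (a₁ < x - d*k) := by omega
        rw [hA] at ic5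
        have heq2 : buildS d k (a₁ :: A') ((x - d*k) :: (parseS d (k+1) t).2) =
            ((x - d*k) + d*k) :: buildS d (k+1) (a₁ :: A') (parseS d (k+1) t).2 := by
          simp [buildS, hrule]
        rw [heq2, ic5]
        congr 1
        omega
    · intro a ha z hz
      simp only [List.head?_cons, Option.some.injEq] at hz
      subst hz
      cases t with
      | nil => simp [parseS] at ha
      | cons z' t' =>
        have h6 := ic6 a ha z' rfl
        have hrel := hchmp.1 z' rfl
        simp only [schurRel] at hrel
        omega
    · intro b hb z hz
      simp only [List.head?_cons, Option.some.injEq] at hb hz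
      subst hb; subst hz
      exact ⟨by omega, fun h => absurd hdx h⟩
  | case3 k x t hdx ih =>
    intro hch hmem hk
    have hk1 : d * (k+1) = d * k + d := by ring
    have hkx : d * k < x := hk x rfl
    have hchmp := List.isChain_cons.mp hch
    have hmx := hmem x (by simp)
    have hxmod : x % d = r ∨ x % d = d - r := by
      rcases hmx.2 with h | h | h
      · exact Or.inl h
      · exact Or.inr h
      · exact absurd (Nat.dvd_of_mod_eq_zero h) hdx
    have iht := ih hchmp.2 (fun z hz => hmem z (by simp [hz]))
      (fun z hz => by
        have := hchmp.1 z hz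
        simp only [schurRel] at this
        omega)
    obtain ⟨ic1, ic2, ic3, ic4, ic5, ic6, ic7⟩ := iht
    have heq : parseS d k (x :: t) = ((x - d*k) :: (parseS d (k+1) t).1, (parseS d (k+1) t).2) := by
      simp [parseS, hdx]
    rw [heq]
    refine ⟨?_, ic2, ?_, ic4, ?_, ?_, ?_⟩
    · refine List.isChain_cons.mpr ⟨?_, ic1⟩
      intro a₁ ha₁
      cases t with
      | nil => simp [parseS] at ha₁
      | cons z t' =>
        have h6 := ic6 a₁ ha₁ z rfl
        have hrel := hchmp.1 z rfl
        simp only [schurRel] at hrel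
        omega
    · intro a ha
      rcases List.mem_cons.mp ha with rfl | ha
      · refine ⟨by omega, ?_⟩
        unfold OKr
        rw [mod_sub_mul (by omega)]
        exact hxmod
      · exact ic3 a ha
    · -- buildS
      cases hB : (parseS d (k+1) t).2 with
      | nil =>
        rw [hB] at ic5
        have heq2 : buildS d k ((x - d*k) :: (parseS d (k+1) t).1) [] =
            ((x - d*k) + d*k) :: buildS d (k+1) (parseS d (k+1) t).1 [] := by
          simp [buildS]
        rw [heq2, ic5]
        congr 1
        omega
      | cons b₁ B' =>
        have hx_lt : x - d*k < b₁ := by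
          cases t with
          | nil => simp [parseS] at hB
          | cons z t' =>
            have h7 := ic7 b₁ (by rw [hB]; rfl) z rfl
            have hrel := hchmp.1 z rfl
            simp only [schurRel] at hrel
            by_cases hdz : d ∣ z
            · have := hrel.2 hdz; omega
            · have := h7.2 hdz; omega
        rw [hB] at ic5
        have heq2 : buildS d k ((x - d*k) :: (parseS d (k+1) t).1) (b₁ :: B') =
            ((x - d*k) + d*k) :: buildS d (k+1) (parseS d (k+1) t).1 (b₁ :: B') := by
          simp [buildS, hx_lt]
        rw [heq2, ic5]
        congr 1
        omega
    · intro a ha z hz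
      simp only [List.head?_cons, Option.some.injEq] at ha hz
      subst ha; subst hz
      omega
    · intro b hb z hz
      simp only [List.head?_cons, Option.some.injEq] at hz
      subst hz
      cases t with
      | nil => simp [parseS] at hb
      | cons z' t' =>
        have h7 := ic7 b hb z' rfl
        have hrel := hchmp.1 z' rfl
        simp only [schurRel] at hrel
        have : x < b + d * k := by
          by_cases hdz : d ∣ z'
          · have := hrel.2 hdz; omega
          · have := h7.2 hdz; omega
        exact ⟨by omega, fun _ => this⟩

/-- spec of `buildD` on good data. -/
lemma buildD_spec (hd : 3 ≤ d) (hr1 : 1 ≤ r) (hr2 : 2 * r < d) :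
    ∀ (k : ℕ) (A B : List ℕ),
    A.Chain' (· ≤ ·) → B.Chain' (fun b b' => b + d ≤ b') →
    (∀ a ∈ A, 1 ≤ a ∧ OKr d r a) → (∀ b ∈ B, d ∣ b ∧ d ≤ b) →
    (buildD d r k A B).Chain' (· < ·) ∧
    (∀ z ∈ buildD d r k A B, 0 < z ∧ OKr d r z) ∧
    parseD d k (buildD d r k A B) = (A, B) ∧
    (∀ z, (buildD d r k A B).head? = some z →
      ((∃ a, A.head? = some a ∧ z = a + d*k) ∨
       (∃ b, B.head? = some b ∧ z = lo d r (b + d*k)))) := by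
  intro k A B
  induction k, A, B using buildD.induct (d := d) (r := r) with
  | case1 k =>
    intro _ _ _ _
    refine ⟨by simp [buildD, List.Chain'], by simp [buildD], by simp [buildD, parseD], by simp [buildD]⟩
  | case2 k b B ih =>
    intro hA hB memA memB
    obtain ⟨ich, imem, ipar, ihead⟩ := ih List.isChain_nil hB.tail (by simp)
      (fun z hz => memB z (by simp [hz]))
    have hk1 : d * (k+1) = d * k + d := by ring
    have hbb := memB b (by simp)
    have hm : d ∣ b + d * k := dvd_add hbb.1 (Dvd.intro k rfl)
    have hm1 : d ≤ b + d * k := by omega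
    have hlh := lo_lt_hi hd hr1 hr2 hm hm1
    have hsum := lo_hi_sum hd hr1 hr2 hm hm1
    have hlop := lo_pos hd hr1 hr2 hm hm1
    have hhla := hi_lt_lo_add hd hr1 hr2 hm hm1
    have heq : buildD d r k [] (b :: B) =
        lo d r (b + d*k) :: hi d r (b + d*k) :: buildD d (r := r) (k+1) [] B := by
      simp [buildD]
    have hrest : ∀ z, (buildD d r (k+1) [] B).head? = some z → hi d r (b + d*k) < z := by
      intro z hz
      rcases ihead z hz with ⟨a, ha, _⟩ | ⟨b', hb', hzv⟩
      · simp at ha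
      · have hb'mem : b' ∈ B := List.mem_of_mem_head? hb'
        have hb'f := memB b' (by simp [hb'mem])
        have hrel : b + d ≤ b' := (List.isChain_cons.mp hB).1 b' hb'
        obtain ⟨c, hc⟩ : ∃ c, b' = b + d + d * c := by
          have hdvd : d ∣ b' - (b + d) := Nat.dvd_sub hb'f.1 (dvd_add hbb.1 dvd_rfl)
          obtain ⟨c, hc⟩ := hdvd
          exact ⟨c, by omega⟩
        have e : b' + d*(k+1) = (b + d*k + 2*d) + d*c := by omega
        have h2d : d ∣ b + d*k + 2*d := dvd_add hm ⟨2, by ring⟩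
        have hmono := lo_add_mul hd hr1 hr2 (m := b + d*k + 2*d) h2d (by omega) c
        have h2 := lo_add_2d hd hr1 hr2 hm hm1
        rw [hzv, e]
        omega
    refine ⟨?_, ?_, ?_, ?_⟩
    · rw [heq]
      refine List.isChain_cons.mpr ⟨by simp; omega, List.isChain_cons.mpr ⟨?_, ich⟩⟩
      intro z hz
      exact hrest z hz
    · rw [heq]
      intro z hz
      rcases List.mem_cons.mp hz with rfl | hz
      · exact ⟨by omega, OKr_lo hd hr1 hr2 hm hm1⟩
      rcases List.mem_cons.mp hz with rfl | hz
      · exact ⟨by omega, OKr_hi hd hr1 hr2 hm hm1⟩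
      · exact imem z hz
    · rw [heq]
      -- parseD on lo :: hi :: rest, pair branch
      have hpair : hi d r (b + d*k) < lo d r (b + d*k) + d := hhla
      simp only [parseD, if_pos hpair, ipar]
      simp
      omega
    · rw [heq]
      intro z hz
      simp only [List.head?_cons, Option.some.injEq] at hz
      subst hz
      exact Or.inr ⟨b, by simp, rfl⟩
  | case3 k a A ih =>
    intro hA hB memA memB
    obtain ⟨ich, imem, ipar, ihead⟩ := ih hA.tail List.isChain_nil
      (fun z hz => memA z (by simp [hz])) (by simp)
    have hk1 : d * (k+1) = d * k + d := by ring
    have haa := memA a (by simp)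
    have heq : buildD d r k (a :: A) [] = (a + d*k) :: buildD d (r := r) (k+1) A [] := by
      simp [buildD]
    have hrest : ∀ z, (buildD d r (k+1) A []).head? = some z → a + d*k + d ≤ z := by
      intro z hz
      rcases ihead z hz with ⟨a', ha', hzv⟩ | ⟨b', hb', _⟩
      · have hrel : a ≤ a' := (List.isChain_cons.mp hA).1 a' ha'
        omega
      · simp at hb'
    refine ⟨?_, ?_, ?_, ?_⟩
    · rw [heq]
      refine List.isChain_cons.mpr ⟨?_, ich⟩
      intro z hz
      have := hrest z hz
      omega
    · rw [heq]
      intro z hz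
      rcases List.mem_cons.mp hz with rfl | hz
      · refine ⟨by omega, ?_⟩
        unfold OKr
        rw [mod_add_mul]
        exact haa.2
      · exact imem z hz
    · rw [heq]
      cases hre : buildD d r (k+1) A [] with
      | nil =>
        have hAnil : A = [] := by
          cases A with
          | nil => rfl
          | cons a' A' => simp [buildD] at hre
        subst hAnil
        simp only [parseD]
        simp
      | cons z rest =>
        have hz := hrest z (by rw [hre]; rfl)
        have hnp : ¬ (z < (a + d*k) + d) := by omega
        rw [hre] at ipar
        simp only [parseD, if_neg hnp]
        rw [ipar]
        simp
        try omega
    · rw [heq]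
      intro z hz
      simp only [List.head?_cons, Option.some.injEq] at hz
      subst hz
      exact Or.inl ⟨a, by simp, rfl⟩
  | case4 k a A b B hrule ih =>
    -- take M: emits lo(b+dk) :: hi(b+dk), keeps a::A
    intro hA hB memA memB
    obtain ⟨ich, imem, ipar, ihead⟩ := ih hA hB.tail memA (fun z hz => memB z (by simp [hz]))
    have hk1 : d * (k+1) = d * k + d := by ring
    have hbb := memB b (by simp)
    have hm : d ∣ b + d * k := dvd_add hbb.1 (Dvd.intro k rfl)
    have hm1 : d ≤ b + d * k := by omega
    have hlh := lo_lt_hi hd hr1 hr2 hm hm1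
    have hsum := lo_hi_sum hd hr1 hr2 hm hm1
    have hlop := lo_pos hd hr1 hr2 hm hm1
    have hhla := hi_lt_lo_add hd hr1 hr2 hm hm1
    have heq : buildD d r k (a :: A) (b :: B) =
        lo d r (b + d*k) :: hi d r (b + d*k) :: buildD d (r := r) (k+1) (a :: A) B := by
      simp [buildD, hrule]
    have hrest : ∀ z, (buildD d r (k+1) (a :: A) B).head? = some z → hi d r (b + d*k) < z := by
      intro z hz
      rcases ihead z hz with ⟨a', ha', hzv⟩ | ⟨b', hb', hzv⟩
      · simp only [List.head?_cons, Option.some.injEq] at ha'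
        subst ha'
        omega
      · have hb'mem : b' ∈ B := List.mem_of_mem_head? hb'
        have hb'f := memB b' (by simp [hb'mem])
        have hrel : b + d ≤ b' := (List.isChain_cons.mp hB).1 b' hb'
        obtain ⟨c, hc⟩ : ∃ c, b' = b + d + d * c := by
          have hdvd : d ∣ b' - (b + d) := Nat.dvd_sub hb'f.1 (dvd_add hbb.1 dvd_rfl)
          obtain ⟨c, hc⟩ := hdvd
          exact ⟨c, by omega⟩
        have e : b' + d*(k+1) = (b + d*k + 2*d) + d*c := by omega
        have h2d : d ∣ b + d*k + 2*d := dvd_add hm ⟨2, by ring⟩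
        have hmono := lo_add_mul hd hr1 hr2 (m := b + d*k + 2*d) h2d (by omega) c
        have h2 := lo_add_2d hd hr1 hr2 hm hm1
        rw [hzv, e]
        omega
    refine ⟨?_, ?_, ?_, ?_⟩
    · rw [heq]
      exact List.isChain_cons.mpr ⟨by simp; omega, List.isChain_cons.mpr ⟨hrest, ich⟩⟩
    · rw [heq]
      intro z hz
      rcases List.mem_cons.mp hz with rfl | hz
      · exact ⟨by omega, OKr_lo hd hr1 hr2 hm hm1⟩
      rcases List.mem_cons.mp hz with rfl | hz
      · exact ⟨by omega, OKr_hi hd hr1 hr2 hm hm1⟩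
      · exact imem z hz
    · rw [heq]
      simp only [parseD, if_pos hhla, ipar]
      simp
      omega
    · rw [heq]
      intro z hz
      simp only [List.head?_cons, Option.some.injEq] at hz
      subst hz
      exact Or.inr ⟨b, by simp, rfl⟩
  | case5 k a A b B hrule ih =>
    -- take U: emits a + d*k, keeps b::B
    intro hA hB memA memB
    obtain ⟨ich, imem, ipar, ihead⟩ := ih hA.tail hB (fun z hz => memA z (by simp [hz])) memB
    have hk1 : d * (k+1) = d * k + d := by ring
    have haa := memA a (by simp)
    have hbb := memB b (by simp)
    have hm : d ∣ b + d * k := dvd_add hbb.1 (Dvd.intro k rfl)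
    have hm1 : d ≤ b + d * k := by omega
    have hlad := lo_add_d hd hr1 hr2 hm hm1
    have heq : buildD d r k (a :: A) (b :: B) = (a + d*k) :: buildD d (r := r) (k+1) A (b :: B) := by
      simp [buildD, hrule]
    have hrest : ∀ z, (buildD d r (k+1) A (b :: B)).head? = some z → a + d*k + d ≤ z := by
      intro z hz
      rcases ihead z hz with ⟨a', ha', hzv⟩ | ⟨b', hb', hzv⟩
      · have ha'mem : a' ∈ A := List.mem_of_mem_head? ha'
        have hrel : a ≤ a' := (List.isChain_cons.mp hA).1 a' ha'
        omega
      · simp only [List.head?_cons, Option.some.injEq] at hb'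
        subst hb'
        -- z = lo (b + d*(k+1)) = hi (b + d*k) ≥ a + d*(k+1)
        have e : b + d*(k+1) = (b + d*k) + d := by omega
        rw [hzv, e, hlad]
        omega
    refine ⟨?_, ?_, ?_, ?_⟩
    · rw [heq]
      refine List.isChain_cons.mpr ⟨?_, ich⟩
      intro z hz
      have := hrest z hz
      omega
    · rw [heq]
      intro z hz
      rcases List.mem_cons.mp hz with rfl | hz
      · refine ⟨by omega, ?_⟩
        unfold OKr
        rw [mod_add_mul]
        exact haa.2
      · exact imem z hz
    · rw [heq]
      cases hre : buildD d r (k+1) A (b :: B) with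
      | nil =>
        exfalso
        cases A with
        | nil => simp [buildD] at hre
        | cons a' A' =>
          by_cases h : hi d r (b + d*(k+1)) < a' + d*(k+1+1)
          · simp [buildD, h] at hre
          · simp [buildD, h] at hre
      | cons z rest =>
        have hz := hrest z (by rw [hre]; rfl)
        have hnp : ¬ (z < (a + d*k) + d) := by omega
        rw [hre] at ipar
        simp only [parseD, if_neg hnp]
        rw [ipar]
        simp
        try omega
    · rw [heq]
      intro z hz
      simp only [List.head?_cons, Option.some.injEq] at hz
      subst hz
      exact Or.inl ⟨a, by simp, rfl⟩

/-- spec of `parseD` on a distinct-parts partition (ascending). -/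
lemma parseD_spec (hd : 3 ≤ d) (hr1 : 1 ≤ r) (hr2 : 2 * r < d) :
    ∀ (k : ℕ) (l : List ℕ),
    l.Chain' (· < ·) →
    (∀ x ∈ l, 0 < x ∧ OKr d r x) →
    (∀ x, l.head? = some x → d * k < x) →
    (parseD d k l).1.Chain' (· ≤ ·) ∧
    (parseD d k l).2.Chain' (fun b b' => b + d ≤ b') ∧
    (∀ a ∈ (parseD d k l).1, 1 ≤ a ∧ OKr d r a) ∧
    (∀ b ∈ (parseD d k l).2, d ∣ b ∧ d ≤ b) ∧
    buildD d r k (parseD d k l).1 (parseD d k l).2 = l ∧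
    (∀ a, (parseD d k l).1.head? = some a → ∀ x, l.head? = some x → x ≤ a + d * k) ∧
    (∀ b, (parseD d k l).2.head? = some b → ∃ j x y, b + d*(k+j) = x + y ∧ x < y ∧ y < x + d ∧
        OKr d r x ∧ OKr d r y ∧ (∀ z, l.head? = some z → z + d*j ≤ x)) := by
  intro k l
  induction k, l using parseD.induct (d := d) with
  | case1 k =>
    intro _ _ _
    refine ⟨by simp [parseD, List.Chain'], by simp [parseD, List.Chain'], by simp [parseD], by simp [parseD],
      by simp [parseD, buildD], by simp [parseD], by simp [parseD]⟩
  | case2 k x =>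
    intro hch hmem hk
    have hkx : d * k < x := hk x rfl
    have hmx := hmem x (by simp)
    have hp : parseD d k [x] = ([x - d*k], []) := by simp [parseD]
    rw [hp]
    refine ⟨by simp [List.Chain'], by simp [List.Chain'], ?_, by simp, ?_, ?_, by simp⟩
    · intro a ha
      simp only [List.mem_singleton] at ha
      subst ha
      refine ⟨by omega, ?_⟩
      unfold OKr
      rw [mod_sub_mul (by omega)]
      exact hmx.2
    · have heq2 : buildD d r k [x - d*k] [] = ((x - d*k) + d*k) :: buildD d (r := r) (k+1) [] [] := by
        simp [buildD]
      rw [heq2]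
      simp [buildD]
      omega
    · intro a ha z hz
      simp only [List.head?_cons, Option.some.injEq] at ha hz
      subst ha; subst hz
      omega
  | case3 k x y t hyx ih =>
    -- pair case
    intro hch hmem hk
    have hk1 : d * (k+1) = d * k + d := by ring
    have hkx : d * k < x := hk x rfl
    have hmx := hmem x (by simp)
    have hmy := hmem y (by simp)
    have hchmp := List.isChain_cons.mp hch
    have hxy : x < y := hchmp.1 y rfl
    have hch2 := List.isChain_cons.mp hchmp.2
    obtain ⟨hdm, hdlem, hlom, hhim⟩ := split_eq hd hr1 hr2 hmx.2 hmy.2 hxy hyx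
    -- every element of t is > y, hence ≥ x + d
    have htz : ∀ z, t.head? = some z → x + d ≤ z := by
      intro z hz
      have hyz : y < z := hch2.1 z hz
      have hmz := hmem z (by simp [List.mem_of_mem_head? hz])
      have := above_hi hd hr1 hr2 hdm hdlem hmz.2 (by omega)
      omega
    have iht := ih hch2.2 (fun z hz => hmem z (by simp [hz]))
      (fun z hz => by have := htz z hz; omega)
    obtain ⟨ic1, ic2, ic3, ic4, ic5, ic6, ic7⟩ := iht
    have heq : parseD d k (x :: y :: t) =
        ((parseD d (k+1) t).1, (x + y - d*k) :: (parseD d (k+1) t).2) := by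
      simp [parseD, hyx]
    have hb₀dvd : d ∣ x + y - d*k := Nat.dvd_sub hdm (Dvd.intro k rfl)
    have hb₀big : d * k + d ≤ x + y - d*k + d*k := by
      have hlt : d * k < x + y := by omega
      have := gap_same hd (a := x + y) (b := d * k)
        (by rw [dvd_mod_zero hdm, dvd_mod_zero (Dvd.intro k rfl)]) hlt
      omega
    rw [heq]
    refine ⟨ic1, ?_, ic3, ?_, ?_, ?_, ?_⟩
    · -- B chain: (x+y-d*k) :: B'
      refine List.isChain_cons.mpr ⟨?_, ic2⟩
      intro b₁ hb₁
      cases t with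
      | nil => simp [parseD] at hb₁
      | cons z t' =>
        obtain ⟨j, x', y', hbval, hxy', hyx', hOKx', hOKy', hbound⟩ := ic7 b₁ hb₁
        have hzx' := hbound z rfl
        have hzxd := htz z rfl
        obtain ⟨hdm', hdlem', hlom', hhim'⟩ := split_eq hd hr1 hr2 hOKx' hOKy' hxy' hyx'
        -- b₁ + d*(k+1+j) = x' + y', x' ≥ z + d*j ≥ x + d + d*j
        rcases Nat.eq_zero_or_pos j with hj0 | hj1
        · -- adjacent pairs: parity argument
          subst hj0
          simp only [Nat.mul_zero, Nat.add_zero] at hbval hzx'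
          -- m' = x' + y' with x' ≥ x + d; m = x + y; m' ≥ m + 2d
          have hmm' : x + y < x' + y' := by omega
          have hge : x + y + d ≤ x' + y' := gap_same hd
            (by rw [dvd_mod_zero hdm', dvd_mod_zero hdm]) hmm'
          have hne : x' + y' ≠ x + y + d := by
            intro hcontra
            have : lo d r (x + y + d) = hi d r (x + y) := lo_add_d hd hr1 hr2 hdm hdlem
            rw [← hcontra, hlom'] at this
            omega
          have hge2 : x + y + 2*d ≤ x' + y' := by
            have hlt2 : x + y + d < x' + y' := by omega
            have := gap_same hd (a := x' + y') (b := x + y + d)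
              (by rw [dvd_mod_zero hdm', dvd_mod_zero (dvd_add hdm dvd_rfl)]) hlt2
            omega
          omega
        · -- j ≥ 1
          have hdj : d ≤ d * j := Nat.le_mul_of_pos_right d hj1
          have hjj : d * (k + 1 + j) = d * k + d + d * j := by ring
          omega
    · intro b hb
      rcases List.mem_cons.mp hb with rfl | hb
      · exact ⟨hb₀dvd, by omega⟩
      · exact ic4 b hb
    · -- buildD reconstruction
      cases hA : (parseD d (k+1) t).1 with
      | nil =>
        rw [hA] at ic5
        have heq2 : buildD d r k [] ((x + y - d*k) :: (parseD d (k+1) t).2) =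
            lo d r ((x + y - d*k) + d*k) :: hi d r ((x + y - d*k) + d*k) ::
              buildD d (r := r) (k+1) [] (parseD d (k+1) t).2 := by
          simp [buildD]
        rw [heq2, ic5]
        have e : (x + y - d*k) + d*k = x + y := by omega
        rw [e, hlom, hhim]
      | cons a₁ A' =>
        have ht_ne : t ≠ [] := by
          intro h; subst h; simp [parseD] at hA
        obtain ⟨z, t', rfl⟩ : ∃ z t', t = z :: t' := by
          cases t with
          | nil => exact absurd rfl ht_ne
          | cons z t' => exact ⟨z, t', rfl⟩
        have h6 := ic6 a₁ (by rw [hA]; rfl) z rfl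
        have hzxd := htz z rfl
        have hrule : hi d r ((x + y - d*k) + d*k) < a₁ + d*(k+1) := by
          have e : (x + y - d*k) + d*k = x + y := by omega
          rw [e, hhim]
          omega
        rw [hA] at ic5
        have heq2 : buildD d r k (a₁ :: A') ((x + y - d*k) :: (parseD d (k+1) (z :: t')).2) =
            lo d r ((x + y - d*k) + d*k) :: hi d r ((x + y - d*k) + d*k) ::
              buildD d (r := r) (k+1) (a₁ :: A') (parseD d (k+1) (z :: t')).2 := by
          simp [buildD, hrule]
        rw [heq2, ic5]
        have e : (x + y - d*k) + d*k = x + y := by omega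
        rw [e, hlom, hhim]
    · -- headA
      intro a ha z hz
      simp only [List.head?_cons, Option.some.injEq] at hz
      subst hz
      cases t with
      | nil => simp [parseD] at ha
      | cons z' t' =>
        have h6 := ic6 a ha z' rfl
        have := htz z' rfl
        omega
    · -- headB
      intro b hb
      simp only [List.head?_cons, Option.some.injEq] at hb
      subst hb
      refine ⟨0, x, y, by simp; omega, hxy, hyx, hmx.2, hmy.2, ?_⟩
      intro z' hz'
      simp only [List.head?_cons, Option.some.injEq] at hz'
      subst hz'
      simp
  | case4 k x y t hyx ih =>
    -- single case: x + d ≤ y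
    intro hch hmem hk
    have hk1 : d * (k+1) = d * k + d := by ring
    have hkx : d * k < x := hk x rfl
    have hmx := hmem x (by simp)
    have hchmp := List.isChain_cons.mp hch
    have hxy : x < y := hchmp.1 y rfl
    have iht := ih hchmp.2 (fun z hz => hmem z (by simp [hz]))
      (fun z hz => by simp only [List.head?_cons, Option.some.injEq] at hz; omega)
    obtain ⟨ic1, ic2, ic3, ic4, ic5, ic6, ic7⟩ := iht
    have heq : parseD d k (x :: y :: t) =
        ((x - d*k) :: (parseD d (k+1) (y :: t)).1, (parseD d (k+1) (y :: t)).2) := by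
      simp [parseD, hyx]
    rw [heq]
    refine ⟨?_, ic2, ?_, ic4, ?_, ?_, ?_⟩
    · refine List.isChain_cons.mpr ⟨?_, ic1⟩
      intro a₁ ha₁
      have h6 := ic6 a₁ ha₁ y rfl
      omega
    · intro a ha
      rcases List.mem_cons.mp ha with rfl | ha
      · refine ⟨by omega, ?_⟩
        unfold OKr
        rw [mod_sub_mul (by omega)]
        exact hmx.2
      · exact ic3 a ha
    · -- buildD reconstruction
      cases hB : (parseD d (k+1) (y :: t)).2 with
      | nil =>
        rw [hB] at ic5
        have heq2 : buildD d r k ((x - d*k) :: (parseD d (k+1) (y :: t)).1) [] =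
            ((x - d*k) + d*k) :: buildD d (r := r) (k+1) (parseD d (k+1) (y :: t)).1 [] := by
          simp [buildD]
        rw [heq2, ic5]
        congr 1
        omega
      | cons b₁ B' =>
        obtain ⟨j, x', y', hbval, hxy', hyx', hOKx', hOKy', hbound⟩ :=
          ic7 b₁ (by rw [hB]; rfl)
        have hyx' := hbound y rfl
        obtain ⟨hdm', hdlem', hlom', hhim'⟩ := split_eq hd hr1 hr2 hOKx' hOKy'
          hxy' (by assumption)
        -- show rule is false: hi (b₁ + d*k) ≥ x + d
        have hb₁dvd : d ∣ b₁ := (ic4 b₁ (by rw [hB]; simp)).1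
        have hb₁ge : d ≤ b₁ := (ic4 b₁ (by rw [hB]; simp)).2
        have hvd : d ∣ b₁ + d*k := dvd_add hb₁dvd (Dvd.intro k rfl)
        have hvd1 : d ≤ b₁ + d*k := by omega
        have hvdd : d ∣ b₁ + d*k + d := dvd_add hvd dvd_rfl
        -- b₁ + d*(k+1) + d*j = x' + y'
        have hjj : d * (k + 1 + j) = d * (k+1) + d * j := by ring
        have hupper := lo_upper hd hr1 hr2 (m := b₁ + d*(k+1)) (by
            have e : b₁ + d*(k+1) = b₁ + d*k + d := by omega
            rw [e]
            exact hvdd) (by omega) j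
        have hloup : lo d r (b₁ + d*(k+1) + d*j) = x' := by
          have e : b₁ + d*(k+1) + d*j = x' + y' := by omega
          rw [e, hlom']
        have hjd : j * (d - 1) + j = d * j := by
          have h1 : d - 1 + 1 = d := by omega
          calc j * (d - 1) + j = j * ((d-1) + 1) := by ring
            _ = j * d := by rw [h1]
            _ = d * j := by ring
        -- lo (b₁ + d*(k+1)) ≥ x' - j*(d-1) ≥ y + j ≥ x + d
        have hlow : x + d ≤ lo d r (b₁ + d*(k+1)) := by omega
        have hlad : lo d r (b₁ + d*k + d) = hi d r (b₁ + d*k) := lo_add_d hd hr1 hr2 hvd hvd1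
        have hrule : ¬ (hi d r (b₁ + d*k) < (x - d*k) + d*(k+1)) := by
          have e : b₁ + d*(k+1) = b₁ + d*k + d := by omega
          rw [e, hlad] at hlow
          omega
        rw [hB] at ic5
        have heq2 : buildD d r k ((x - d*k) :: (parseD d (k+1) (y :: t)).1) (b₁ :: B') =
            ((x - d*k) + d*k) :: buildD d (r := r) (k+1) (parseD d (k+1) (y :: t)).1 (b₁ :: B') := by
          simp [buildD, hrule]
        rw [heq2, ic5]
        congr 1
        omega
    · intro a ha z hz
      simp only [List.head?_cons, Option.some.injEq] at ha hz
      subst ha; subst hz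
      omega
    · -- headB
      intro b hb
      obtain ⟨j, x', y', hbval, hxy', hyx', hOKx', hOKy', hbound⟩ := ic7 b hb
      refine ⟨j + 1, x', y', ?_, hxy', hyx', hOKx', hOKy', ?_⟩
      · have e : d * (k + (j+1)) = d * (k + 1 + j) := by ring
        rw [e]
        exact hbval
      · intro z hz'
        simp only [List.head?_cons, Option.some.injEq] at hz'
        subst hz'
        have := hbound y rfl
        have e : d * (j + 1) = d * j + d := by ring
        omega

/-- staircase sum. -/
def stair (k : ℕ) : ℕ → ℕ
  | 0 => 0
  | n+1 => k + stair (k+1) n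

lemma buildS_sum : ∀ (k : ℕ) (A B : List ℕ),
    (buildS d k A B).sum = A.sum + B.sum + d * stair k (A.length + B.length) := by
  intro k A B
  induction k, A, B using buildS.induct with
  | case1 k => simp [buildS, stair]
  | case2 k b B ih =>
    have heq : buildS d k [] (b :: B) = (b + d*k) :: buildS d (k+1) [] B := by simp [buildS]
    rw [heq]
    simp only [List.sum_cons, ih]
    simp [stair, Nat.mul_add]
    omega
  | case3 k a A ih =>
    have heq : buildS d k (a :: A) [] = (a + d*k) :: buildS d (k+1) A [] := by simp [buildS]
    rw [heq]
    simp only [List.sum_cons, ih]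
    simp [stair, Nat.mul_add]
    omega
  | case4 k a A b B hab ih =>
    have heq : buildS d k (a :: A) (b :: B) = (a + d*k) :: buildS d (k+1) A (b :: B) := by
      simp [buildS, hab]
    rw [heq]
    simp only [List.sum_cons, ih]
    have e1 : (a :: A).length + (b :: B).length = (A.length + (b :: B).length) + 1 := by
      simp; omega
    rw [e1]
    simp [stair, Nat.mul_add]
    omega
  | case5 k a A b B hab ih =>
    have heq : buildS d k (a :: A) (b :: B) = (b + d*k) :: buildS d (k+1) (a :: A) B := by
      simp [buildS, hab]
    rw [heq]
    simp only [List.sum_cons, ih]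
    have e1 : (a :: A).length + (b :: B).length = ((a :: A).length + B.length) + 1 := by
      simp; omega
    rw [e1]
    simp [stair, Nat.mul_add]
    omega

lemma buildD_sum (hd : 3 ≤ d) (hr1 : 1 ≤ r) (hr2 : 2 * r < d) : ∀ (k : ℕ) (A B : List ℕ),
    (∀ b ∈ B, d ∣ b ∧ d ≤ b) →
    (buildD d r k A B).sum = A.sum + B.sum + d * stair k (A.length + B.length) := by
  intro k A B
  induction k, A, B using buildD.induct (d := d) (r := r) with
  | case1 k => intro _; simp [buildD, stair]
  | case2 k b B ih =>
    intro memB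
    have hbb := memB b (by simp)
    have hm : d ∣ b + d * k := dvd_add hbb.1 (Dvd.intro k rfl)
    have hm1 : d ≤ b + d * k := by
      have : 0 ≤ d * k := Nat.zero_le _
      omega
    have hsum := lo_hi_sum hd hr1 hr2 hm hm1
    have heq : buildD d r k [] (b :: B) =
        lo d r (b + d*k) :: hi d r (b + d*k) :: buildD d (r := r) (k+1) [] B := by
      simp [buildD]
    rw [heq]
    simp only [List.sum_cons, ih (fun z hz => memB z (by simp [hz]))]
    simp [stair, Nat.mul_add]
    omega
  | case3 k a A ih =>
    intro memB
    have heq : buildD d r k (a :: A) [] = (a + d*k) :: buildD d (r := r) (k+1) A [] := by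
      simp [buildD]
    rw [heq]
    simp only [List.sum_cons, ih (by simp)]
    simp [stair, Nat.mul_add]
    omega
  | case4 k a A b B hrule ih =>
    intro memB
    have hbb := memB b (by simp)
    have hm : d ∣ b + d * k := dvd_add hbb.1 (Dvd.intro k rfl)
    have hm1 : d ≤ b + d * k := by
      have : 0 ≤ d * k := Nat.zero_le _
      omega
    have hsum := lo_hi_sum hd hr1 hr2 hm hm1
    have heq : buildD d r k (a :: A) (b :: B) =
        lo d r (b + d*k) :: hi d r (b + d*k) :: buildD d (r := r) (k+1) (a :: A) B := by
      simp [buildD, hrule]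
    rw [heq]
    simp only [List.sum_cons, ih (fun z hz => memB z (by simp [hz]))]
    have e1 : (a :: A).length + (b :: B).length = ((a :: A).length + B.length) + 1 := by
      simp; omega
    rw [e1]
    simp [stair, Nat.mul_add]
    omega
  | case5 k a A b B hrule ih =>
    intro memB
    have heq : buildD d r k (a :: A) (b :: B) = (a + d*k) :: buildD d (r := r) (k+1) A (b :: B) := by
      simp [buildD, hrule]
    rw [heq]
    simp only [List.sum_cons, ih memB]
    have e1 : (a :: A).length + (b :: B).length = (A.length + (b :: B).length) + 1 := by
      simp; omega
    rw [e1]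
    simp [stair, Nat.mul_add]
    omega


end Sside

section main
variable (d r : ℕ)

/-- the bijection from Schur partitions to distinct partitions. -/
def Fmap (l : List ℕ) : List ℕ :=
  (buildD d r 0 (parseS d 0 l.reverse).1 (parseS d 0 l.reverse).2).reverse

/-- the inverse bijection. -/
def Gmap (m : List ℕ) : List ℕ :=
  (buildS d 0 (parseD d 0 m.reverse).1 (parseD d 0 m.reverse).2).reverse
end main

end SchurPf

open SchurPf

/-- `l` is a partition of `n`: non-increasing list of positive integers summing to `n`. -/
def PartitionOf (l : List ℕ) (n : ℕ) : Prop :=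
  l.Pairwise (· ≥ ·) ∧ (∀ x ∈ l, 0 < x) ∧ l.sum = n

/-- **Schur's partition theorem.** The number of partitions of `n` into parts ≡ r, d−r, 0 (mod d)
with successive parts differing by at least `d`, strictly when the larger of the two parts is
divisible by `d`, equals the number of partitions of `n` into distinct parts ≡ ±r (mod d). -/
theorem schur_partition_theorem (d r n : ℕ) (hd : 3 ≤ d) (hr1 : 1 ≤ r) (hr2 : 2 * r < d) :
    {l : List ℕ | PartitionOf l n ∧ (∀ x ∈ l, x % d = r ∨ x % d = d - r ∨ x % d = 0) ∧
        l.Chain' (fun a b => b + d ≤ a ∧ (d ∣ a → b + d < a))}.ncard =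
    {l : List ℕ | l.Pairwise (· > ·) ∧ (∀ x ∈ l, 0 < x) ∧ l.sum = n ∧
        ∀ x ∈ l, x % d = r ∨ x % d = d - r}.ncard := by
  classical
  set S₀ : Set (List ℕ) := {l : List ℕ | PartitionOf l n ∧
      (∀ x ∈ l, x % d = r ∨ x % d = d - r ∨ x % d = 0) ∧
      l.Chain' (fun a b => b + d ≤ a ∧ (d ∣ a → b + d < a))} with hS₀
  set D₀ : Set (List ℕ) := {l : List ℕ | l.Pairwise (· > ·) ∧ (∀ x ∈ l, 0 < x) ∧ l.sum = n ∧
      ∀ x ∈ l, x % d = r ∨ x % d = d - r} with hD₀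
  have hFwd : ∀ l ∈ S₀, Fmap d r l ∈ D₀ ∧ Gmap d (Fmap d r l) = l := by
    intro l hl
    obtain ⟨⟨hsort, hpos, hsum⟩, hres, hchain⟩ := hl
    have hch' : l.reverse.Chain' (schurRel d) := by
      rw [List.Chain', List.isChain_reverse]
      exact hchain.imp (fun {a b} h => h)
    have hmem' : ∀ x ∈ l.reverse, 0 < x ∧ (x % d = r ∨ x % d = d - r ∨ x % d = 0) := by
      intro x hx
      rw [List.mem_reverse] at hx
      exact ⟨hpos x hx, hres x hx⟩
    have hk0 : ∀ x, l.reverse.head? = some x → d * 0 < x := by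
      intro x hx
      have := (hmem' x (List.mem_of_mem_head? hx)).1
      omega
    obtain ⟨c1, c2, c3, c4, c5, c6, c7⟩ := parseS_spec hd hr1 hr2 0 l.reverse hch' hmem' hk0
    set A := (parseS d 0 l.reverse).1 with hA
    set B := (parseS d 0 l.reverse).2 with hB
    obtain ⟨d1, d2, d3, d4⟩ := buildD_spec hd hr1 hr2 0 A B c1 c2 c3 c4
    have hsum' : (buildD d r 0 A B).sum = n := by
      rw [buildD_sum hd hr1 hr2 0 A B c4, ← buildS_sum, c5, List.sum_reverse, hsum]
    have hFval : Fmap d r l = (buildD d r 0 A B).reverse := rfl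
    constructor
    · rw [hFval, hD₀]
      simp only [Set.mem_setOf_eq]
      refine ⟨?_, ?_, ?_, ?_⟩
      · have hpw : (buildD d r 0 A B).Pairwise (· < ·) := List.isChain_iff_pairwise.mp d1
        exact List.pairwise_reverse.mpr (hpw.imp (fun {a b} h => h))
      · intro x hx
        rw [List.mem_reverse] at hx
        exact (d2 x hx).1
      · rw [List.sum_reverse]; exact hsum'
      · intro x hx
        rw [List.mem_reverse] at hx
        exact (d2 x hx).2
    · rw [hFval]
      unfold Gmap
      rw [List.reverse_reverse, d3]
      show (buildS d 0 A B).reverse = l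
      rw [c5, List.reverse_reverse]
  have hBwd : ∀ m ∈ D₀, Gmap d m ∈ S₀ ∧ Fmap d r (Gmap d m) = m := by
    intro m hm
    obtain ⟨hsort, hpos, hsum, hres⟩ := hm
    have hch' : m.reverse.Chain' (· < ·) := by
      have hpw : m.reverse.Pairwise (· < ·) :=
        List.pairwise_reverse.mpr (hsort.imp (fun {a b} h => h))
      exact hpw.isChain
    have hmem' : ∀ x ∈ m.reverse, 0 < x ∧ OKr d r x := by
      intro x hx
      rw [List.mem_reverse] at hx
      exact ⟨hpos x hx, hres x hx⟩
    have hk0 : ∀ x, m.reverse.head? = some x → d * 0 < x := by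
      intro x hx
      have := (hmem' x (List.mem_of_mem_head? hx)).1
      omega
    obtain ⟨c1, c2, c3, c4, c5, c6, c7⟩ := parseD_spec hd hr1 hr2 0 m.reverse hch' hmem' hk0
    set A := (parseD d 0 m.reverse).1 with hA
    set B := (parseD d 0 m.reverse).2 with hB
    obtain ⟨e1, e2, e3, e4⟩ := buildS_spec hd hr1 hr2 0 A B c1 c2 c3 c4
    have hsum' : (buildS d 0 A B).sum = n := by
      rw [buildS_sum, ← buildD_sum hd hr1 hr2 0 A B c4, c5, List.sum_reverse, hsum]
    have hGval : Gmap d m = (buildS d 0 A B).reverse := rfl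
    have hchainrev : (buildS d 0 A B).reverse.Chain'
        (fun a b => b + d ≤ a ∧ (d ∣ a → b + d < a)) := by
      rw [List.Chain', List.isChain_reverse]
      exact e1.imp (fun {a b} h => h)
    constructor
    · rw [hGval, hS₀]
      simp only [Set.mem_setOf_eq]
      haveI : Trans (fun a b => b + d ≤ a ∧ (d ∣ a → b + d < a))
          (fun a b => b + d ≤ a ∧ (d ∣ a → b + d < a)) (fun a b => b + d ≤ a ∧ (d ∣ a → b + d < a)) :=
        ⟨fun {a b c} h1 h2 => ⟨by omega, fun _ => by omega⟩⟩
      have hpw := List.isChain_iff_pairwise.mp hchainrev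
      refine ⟨⟨?_, ?_, ?_⟩, ?_, hchainrev⟩
      · exact hpw.imp (fun {a b} h => by omega)
      · intro x hx
        rw [List.mem_reverse] at hx
        exact (e2 x hx).1
      · rw [List.sum_reverse]; exact hsum'
      · intro x hx
        rw [List.mem_reverse] at hx
        rcases (e2 x hx).2 with h | h | h
        · exact Or.inl h
        · exact Or.inr (Or.inl h)
        · exact Or.inr (Or.inr h)
    · rw [hGval]
      unfold Fmap
      rw [List.reverse_reverse, e3]
      show (buildD d r 0 A B).reverse = m
      rw [c5, List.reverse_reverse]
  have hbij : Set.BijOn (Fmap d r) S₀ D₀ := by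
    have hinv : Set.InvOn (Gmap d) (Fmap d r) S₀ D₀ :=
      ⟨fun l hl => (hFwd l hl).2, fun m hm => (hBwd m hm).2⟩
    exact hinv.bijOn (fun l hl => (hFwd l hl).1) (fun m hm => (hBwd m hm).1)
  rw [← hbij.image_eq, Set.ncard_image_of_injOn hbij.injOn]
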